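/- For the polynomial f = (y^3 - x^4)^5 + x^2 y^{15}, the monodromy zeta function ζ(T) = (T^{330}-1)(T^{60}-1)/((T^{66}-1)(T^{15}-1)(T^{20}-1)) has exp(2πi/110) as a root of its numerator not cancelled by the denominator; hence exp(2πi/110) is a monodromy eigenvalue. -/

import Mathlib

/-- For `f = (y³-x⁴)⁵ + x²y¹⁵`, with `λ = exp(2πi/110)`:
`λ³³⁰ = 1` while `λ⁶⁶ ≠ 1`, `λ¹⁵ ≠ 1`, `λ²⁰ ≠ 1` and `λ⁶⁰ ≠ 1`; hence `λ` is a simple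
zero of the numerator `(T³³⁰-1)(T⁶⁰-1)` of the monodromy zeta function, not cancelled
by the denominator `(T⁶⁶-1)(T¹⁵-1)(T²⁰-1)`, so `λ` is a monodromy eigenvalue. -/
theorem stmt_8 :
    (Complex.exp (2 * Real.pi * Complex.I / 110)) ^ 330 = 1 ∧
    (Complex.exp (2 * Real.pi * Complex.I / 110)) ^ 66 ≠ 1 ∧
    (Complex.exp (2 * Real.pi * Complex.I / 110)) ^ 15 ≠ 1 ∧
    (Complex.exp (2 * Real.pi * Complex.I / 110)) ^ 20 ≠ 1 ∧
    (Complex.exp (2 * Real.pi * Complex.I / 110)) ^ 60 ≠ 1 := by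
  have hprim : IsPrimitiveRoot (Complex.exp (2 * Real.pi * Complex.I / 110)) 110 := by
    exact_mod_cast Complex.isPrimitiveRoot_exp 110 (by norm_num)
  simp only [hprim.pow_eq_one_iff_dvd, ne_eq]
  decide
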